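/- There is no universal automatic randomness test: there is no ART (J, V) such that for every ART (I, U) one has F(I, U) ⊆ F(J, V). -/

import Mathlib

open MeasureTheory Filter

/-- The fair-coin product probability measure on Cantor space `ℕ → Bool`,
constructed as the pushforward of Lebesgue measure on `[0,1)` under binary expansion. -/
noncomputable def mu : Measure (ℕ → Bool) :=
  Measure.map (fun x n => decide (⌊x * 2 ^ (n + 1)⌋ % 2 = 1))
    (volume.restrict (Set.Ico (0 : ℝ) 1))

/-- Action of a word on a state of an automaton. -/
def act {S A : Type*} (f : S → A → S) (s : S) (w : List A) : S := w.foldl f s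

/-- The run of a sequence `X` on the machine `(S, f, s₀)`. -/
def run {S : Type*} (f : S → Bool → S) (s₀ : S) (X : ℕ → Bool) : ℕ → S
  | 0 => s₀
  | n + 1 => f (run f s₀ X n) (X n)

/-- `t` is reachable from `s`. -/
def Reach {S : Type*} (f : S → Bool → S) (s t : S) : Prop := ∃ w : List Bool, act f s w = t

/-- The connected component of a state `s`. -/
def component {S : Type*} (f : S → Bool → S) (s : S) : Set S :=
  {t | Reach f s t ∧ Reach f t s}

/-- `g` is a leaf connected component. -/
def IsLeafComponent {S : Type*} (f : S → Bool → S) (g : Set S) : Prop :=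
  (∃ s, g = component f s) ∧ ∀ s ∈ g, ∀ t, Reach f s t → Reach f t s

/-- The word `w` occurs as a subword of the sequence `X`. -/
def Occurs (w : List Bool) (X : ℕ → Bool) : Prop :=
  ∃ n, ∀ k < w.length, X (n + k) = w.getD k false

/-- `X` is disjunctive: every word occurs in `X` as a subword. -/
def Disjunctive (X : ℕ → Bool) : Prop := ∀ w : List Bool, Occurs w X

/-- The word `w` is a prefix of the sequence `X`. -/
def IsPrefixOfSeq (w : List Bool) (X : ℕ → Bool) : Prop :=
  ∀ k < w.length, X k = w.getD k false

/-- `[L]`: the set of sequences having some prefix in the language `L`. -/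
def cyl (L : Set (List Bool)) : Set (ℕ → Bool) := {X | ∃ w ∈ L, IsPrefixOfSeq w X}

/-- `I(X)`: the set of states visited infinitely often by the run of `X`. -/
def InfOcc {S : Type*} (f : S → Bool → S) (s₀ : S) (X : ℕ → Bool) : Set S :=
  {s | ∃ᶠ n in atTop, run f s₀ X n = s}

/-- `X` is accepted by the deterministic Büchi automaton `(S, f, s₀, F)`. -/
def BuchiAccepts {S : Type*} (f : S → Bool → S) (s₀ : S) (F : Set S) (X : ℕ → Bool) : Prop :=
  ∃ᶠ n in atTop, run f s₀ X n ∈ F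

/-- A language is regular if it is accepted by a DFA with finitely many states. -/
def Regular {A : Type} (L : Set (List A)) : Prop :=
  ∃ (S : Type) (_ : Fintype S) (f : S → A → S) (s₀ : S) (F : Set S),
    L = {w | act f s₀ w ∈ F}

/-- The convolution of two words. -/
def conv (x i : List Bool) : List (Option Bool × Option Bool) :=
  (List.range (max x.length i.length)).map (fun k => (x[k]?, i[k]?))

/-- `(I, U)` is an automatic family. -/
def IsAutomaticFamily (I : Set (List Bool)) (U : List Bool → Set (List Bool)) : Prop :=
  Regular I ∧ Regular {c | ∃ i ∈ I, ∃ x ∈ U i, c = conv x i}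

/-- `(I, U)` is an automatic randomness test (ART). -/
def IsART (I : Set (List Bool)) (U : List Bool → Set (List Bool)) : Prop :=
  IsAutomaticFamily I U ∧ ∀ ε : ENNReal, 0 < ε → ∃ i ∈ I, mu (cyl (U i)) ≤ ε

/-- `(I, U)` is a Martin-Löf automatic randomness test (MART). -/
def IsMART (I : Set (List Bool)) (U : List Bool → Set (List Bool)) : Prop :=
  IsAutomaticFamily I U ∧ I.Infinite ∧
    ∀ i ∈ I, mu (cyl (U i)) ≤ (2 : ENNReal) ^ (-(i.length : ℤ))

/-- The covering region `F(I, U)` of a test. -/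
def coverRegion (I : Set (List Bool)) (U : List Bool → Set (List Bool)) : Set (ℕ → Bool) :=
  ⋂ i ∈ I, cyl (U i)

/-!
Let `(J, V)` be an ART and pick `j ∈ J` with `μ [V j] ≤ 1/2`. The slice `V j` is a regular
language, recognised by a DFA with accepting set `F`, and a sequence lies outside `[V j]` exactly
when its run never enters `F`; such sequences exist because `μ [V j] < 1`. Choosing at every state
that admits an `F`-avoiding run a letter preserving this property turns one such sequence into a
sequence `Y` produced by a finite autonomous system. The family `i ↦ {Y ↾ |i|}` is then an ART
whose covering region contains `Y ∉ [V j]`, so `(J, V)` is not universal.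
-/

lemma act_append {S A : Type*} (f : S → A → S) (s : S) (u v : List A) :
    act f s (u ++ v) = act f (act f s u) v := List.foldl_append

def seqPrefix (X : ℕ → Bool) (n : ℕ) : List Bool := (List.range n).map X

@[simp] lemma seqPrefix_length (X : ℕ → Bool) (n : ℕ) : (seqPrefix X n).length = n := by
  simp [seqPrefix]

lemma getElem?_seqPrefix (X : ℕ → Bool) {n k : ℕ} (h : k < n) :
    (seqPrefix X n)[k]? = some (X k) := by
  simp [seqPrefix, h]

lemma seqPrefix_succ (X : ℕ → Bool) (n : ℕ) :
    seqPrefix X (n + 1) = X 0 :: seqPrefix (fun k => X (k + 1)) n := by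
  simp [seqPrefix, List.range_succ_eq_map]

lemma isPrefixOfSeq_iff_eq_seqPrefix (w : List Bool) (X : ℕ → Bool) :
    IsPrefixOfSeq w X ↔ w = seqPrefix X w.length := by
  refine ⟨fun h => List.ext_getElem? fun k => ?_, fun h k hk => ?_⟩
  · rcases lt_or_ge k w.length with hk | hk
    · rw [getElem?_seqPrefix X hk, h k hk, List.getD_eq_getElem _ _ hk, List.getElem?_eq_getElem]
    · simp [hk]
  · rw [h, List.getD_eq_getElem?_getD, getElem?_seqPrefix X (by simpa using hk)]
    rfl

lemma isPrefixOfSeq_seqPrefix (X : ℕ → Bool) (n : ℕ) : IsPrefixOfSeq (seqPrefix X n) X := by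
  rw [isPrefixOfSeq_iff_eq_seqPrefix, seqPrefix_length]

lemma cyl_singleton (w : List Bool) : cyl {w} = {X | IsPrefixOfSeq w X} := by
  ext X; simp [cyl]

section Run

variable {S : Type*} (f : S → Bool → S)

lemma run_eq_act_seqPrefix (s₀ : S) (X : ℕ → Bool) (n : ℕ) :
    run f s₀ X n = act f s₀ (seqPrefix X n) := by
  induction n with
  | zero => rfl
  | succ n ih => simp [run, ih, seqPrefix, List.range_succ, act]

lemma mem_cyl_setOf_act_iff (s₀ : S) (F : Set S) (X : ℕ → Bool) :
    X ∈ cyl {w | act f s₀ w ∈ F} ↔ ∃ n, run f s₀ X n ∈ F := by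
  simp only [cyl, Set.mem_ofPred_eq, run_eq_act_seqPrefix]
  constructor
  · rintro ⟨w, hw, hpre⟩
    rw [isPrefixOfSeq_iff_eq_seqPrefix] at hpre
    exact ⟨w.length, hpre ▸ hw⟩
  · rintro ⟨n, hn⟩
    exact ⟨_, hn, isPrefixOfSeq_seqPrefix X n⟩

lemma run_succ_eq_run_shift (s : S) (X : ℕ → Bool) (n : ℕ) :
    run f s X (n + 1) = run f (f s (X 0)) (fun k => X (k + 1)) n := by
  induction n with
  | zero => rfl
  | succ n ih => rw [run, ih]; rfl

end Run

lemma getElem?_conv (x i : List Bool) (k : ℕ) :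
    (conv x i)[k]? = if k < max x.length i.length then some (x[k]?, i[k]?) else none := by
  split_ifs with h <;> simp [conv, h]

lemma conv_cons_cons (a b : Bool) (x i : List Bool) :
    conv (a :: x) (b :: i) = (some a, some b) :: conv x i := by
  refine List.ext_getElem? fun k => ?_
  cases k <;> simp [getElem?_conv]

lemma conv_injective {x i x' i' : List Bool} (h : conv x i = conv x' i') : x = x' ∧ i = i' := by
  have hlen : max x.length i.length = max x'.length i'.length := by
    simpa [conv] using congrArg List.length h
  have hk (k : ℕ) : x[k]? = x'[k]? ∧ i[k]? = i'[k]? := by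
    have := congrArg (·[k]?) h
    simp only [getElem?_conv, ← hlen] at this
    split_ifs at this with hk
    · simpa using this
    · rw [List.getElem?_eq_none (by omega), List.getElem?_eq_none (by omega),
        List.getElem?_eq_none (by omega), List.getElem?_eq_none (by omega)]
      exact ⟨rfl, rfl⟩
  exact ⟨List.ext_getElem? fun k => (hk k).1, List.ext_getElem? fun k => (hk k).2⟩

lemma conv_eq_conv_take_append (x i : List Bool) :
    conv x i = conv x (i.take x.length) ++ (i.drop x.length).map fun c => (none, some c) := by
  refine List.ext_getElem? fun k => ?_
  have hmax : max x.length (min x.length i.length) = x.length := by omega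
  rw [List.getElem?_append, getElem?_conv, getElem?_conv]
  simp only [List.length_take, hmax, List.getElem?_take, List.getElem?_map, List.getElem?_drop,
    conv, List.length_map, List.length_range]
  by_cases hx : k < x.length
  · simp [hx, show k < max x.length i.length by omega]
  · rw [List.getElem?_eq_none (not_lt.mp hx), show x.length + (k - x.length) = k by omega]
    by_cases hi : k < i.length
    · simp [hx, hi]
    · simp [hx, List.getElem?_eq_none (not_lt.mp hi), show ¬ k < max x.length i.length by omega]

lemma length_conv_take (x i : List Bool) : (conv x (i.take x.length)).length = x.length := by
  simp [conv]

lemma conv_append_singleton_take (x i : List Bool) (b : Bool) :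
    conv (x ++ [b]) (i.take (x.length + 1))
      = conv x (i.take x.length) ++ [(some b, i[x.length]?)] := by
  refine List.ext_getElem? fun k => ?_
  rw [List.getElem?_append, length_conv_take, getElem?_conv, getElem?_conv]
  simp only [List.length_append, List.length_take, List.length_singleton, List.getElem?_take]
  rcases lt_trichotomy k x.length with hk | rfl | hk
  · simp [hk, show k < x.length + 1 by omega]
  · simp
  · simp [show ¬ k < x.length + 1 by omega, show ¬ k < x.length by omega]
    omega

def sliceStep {S : Type*} (f : S → Option Bool × Option Bool → S) (i : List Bool)
    (t : S × Fin (i.length + 1)) (b : Bool) : S × Fin (i.length + 1) :=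
  (f t.1 (some b, i[(t.2 : ℕ)]?), ⟨min (t.2 + 1) i.length, by omega⟩)

lemma act_sliceStep {S : Type*} (f : S → Option Bool × Option Bool → S) (i : List Bool)
    (s₀ : S) (x : List Bool) :
    act (sliceStep f i) (s₀, 0) x
      = (act f s₀ (conv x (i.take x.length)), ⟨min x.length i.length, by omega⟩) := by
  induction x using List.reverseRecOn with
  | nil => rfl
  | append_singleton x b ih =>
    simp only [act_append, ih, List.length_append, List.length_singleton,
      conv_append_singleton_take]
    refine Prod.ext ?_ (Fin.ext ?_)
    · have hget : i[min x.length i.length]? = i[x.length]? := by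
        rcases le_total x.length i.length with h | h
        · rw [min_eq_left h]
        · rw [min_eq_right h, List.getElem?_eq_none h, List.getElem?_eq_none le_rfl]
      exact congrArg (fun c => f _ (some b, c)) hget
    · show min (min x.length i.length + 1) i.length = min (x.length + 1) i.length
      omega

/-- A DFA for the slice `U i` runs the automaton of the family on `conv x i` while reading `x`
(the `Fin` component is the number of letters of `i` read so far) and finally feeds it the unread
tail of `i`. -/
theorem IsAutomaticFamily.regular_of_mem {I : Set (List Bool)} {U : List Bool → Set (List Bool)}
    (h : IsAutomaticFamily I U) {i : List Bool} (hi : i ∈ I) : Regular (U i) := by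
  obtain ⟨S, _, f, s₀, F, hC⟩ := h.2
  refine ⟨S × Fin (i.length + 1), inferInstance, sliceStep f i, (s₀, 0),
    {t | act f t.1 ((i.drop t.2).map fun c => (none, some c)) ∈ F}, Set.ext fun x => ?_⟩
  have hmem : x ∈ U i ↔ conv x i ∈ {c | ∃ i ∈ I, ∃ x ∈ U i, c = conv x i} := by
    refine ⟨fun hx => ⟨i, hi, x, hx, rfl⟩, ?_⟩
    rintro ⟨i', -, x', hx', he⟩
    obtain ⟨rfl, rfl⟩ := conv_injective he
    exact hx'
  have hdrop : i.drop (min x.length i.length) = i.drop x.length := by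
    rcases le_total x.length i.length with h | h
    · rw [min_eq_left h]
    · rw [min_eq_right h, List.drop_of_length_le h, List.drop_length]
  rw [hmem, hC]
  simp only [Set.mem_ofPred_eq, act_sliceStep, hdrop, conv_eq_conv_take_append x i, act_append]

noncomputable def binaryDigits (x : ℝ) (n : ℕ) : Bool := decide (⌊x * 2 ^ (n + 1)⌋ % 2 = 1)

lemma mu_eq_map_binaryDigits : mu = (volume.restrict (Set.Ico (0 : ℝ) 1)).map binaryDigits := rfl

lemma measurable_binaryDigits : Measurable binaryDigits :=
  measurable_pi_lambda _ fun _ =>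
    (measurable_from_top (f := fun z : ℤ => decide (z % 2 = 1))).comp
      (Int.measurable_floor.comp (measurable_id.mul_const _))

instance : IsProbabilityMeasure mu := by
  rw [mu_eq_map_binaryDigits]
  constructor
  rw [Measure.map_apply measurable_binaryDigits MeasurableSet.univ]
  simp [Real.volume_Ico]

lemma measurableSet_setOf_isPrefixOfSeq (w : List Bool) :
    MeasurableSet {X : ℕ → Bool | IsPrefixOfSeq w X} := by
  simp only [IsPrefixOfSeq, Set.ofPred_forall]
  exact .iInter fun k => .iInter fun _ =>
    measurableSet_eq_fun (measurable_pi_apply k) measurable_const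

lemma Int.floor_two_mul_eq (y : ℝ) : ⌊2 * y⌋ = 2 * ⌊y⌋ + ⌊2 * y⌋ % 2 := by
  have h1 : 2 * ⌊y⌋ ≤ ⌊2 * y⌋ := by
    rw [Int.le_floor]; push_cast; linarith [Int.floor_le y]
  have h2 : ⌊2 * y⌋ < 2 * ⌊y⌋ + 2 := by
    rw [Int.floor_lt]; push_cast; linarith [Int.lt_floor_add_one y]
  omega

lemma floor_mul_two_pow_eq_of_binaryDigits_eq {x y : ℝ} (h₀ : ⌊x⌋ = ⌊y⌋) {L : ℕ}
    (h : ∀ k < L, binaryDigits x k = binaryDigits y k) : ⌊x * 2 ^ L⌋ = ⌊y * 2 ^ L⌋ := by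
  induction L with
  | zero => simpa using h₀
  | succ k ih =>
    have e (z : ℝ) : z * 2 ^ (k + 1) = 2 * (z * 2 ^ k) := by ring
    have hk : ⌊2 * (x * 2 ^ k)⌋ % 2 = ⌊2 * (y * 2 ^ k)⌋ % 2 := by
      have := decide_eq_decide.mp (h k k.lt_succ_self)
      simp only [e] at this
      rcases Int.emod_two_eq ⌊2 * (x * 2 ^ k)⌋ with h | h <;>
        rcases Int.emod_two_eq ⌊2 * (y * 2 ^ k)⌋ with h' | h' <;> omega
    rw [e, e, Int.floor_two_mul_eq, Int.floor_two_mul_eq (y * 2 ^ k),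
      ih fun k hk => h k (by omega), hk]

lemma volume_setOf_floor_mul_two_pow_eq_le (L : ℕ) (c : ℤ) :
    volume {x : ℝ | ⌊x * 2 ^ L⌋ = c} ≤ 2⁻¹ ^ L := by
  have hpos : (0 : ℝ) < 2 ^ L := by positivity
  have hsub : {x : ℝ | ⌊x * 2 ^ L⌋ = c} ⊆ Set.Ico (c / 2 ^ L) ((c + 1) / 2 ^ L) := by
    intro x hx
    rw [Set.mem_ofPred_eq, Int.floor_eq_iff] at hx
    rw [Set.mem_Ico, div_le_iff₀ hpos, lt_div_iff₀ hpos]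
    exact hx
  calc volume {x : ℝ | ⌊x * 2 ^ L⌋ = c}
      ≤ volume (Set.Ico ((c : ℝ) / 2 ^ L) ((c + 1) / 2 ^ L)) := measure_mono hsub
    _ = ENNReal.ofReal (2⁻¹ ^ L) := by
      rw [Real.volume_Ico]; congr 1; field_simp; rw [← mul_pow]; norm_num
    _ = 2⁻¹ ^ L := by
      rw [ENNReal.ofReal_pow (by norm_num), ENNReal.ofReal_inv_of_pos (by norm_num)]
      norm_num

lemma mu_setOf_isPrefixOfSeq_le (w : List Bool) :
    mu {X | IsPrefixOfSeq w X} ≤ 2⁻¹ ^ w.length := by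
  rw [mu_eq_map_binaryDigits, Measure.map_apply measurable_binaryDigits
    (measurableSet_setOf_isPrefixOfSeq w), Measure.restrict_apply
    (measurable_binaryDigits (measurableSet_setOf_isPrefixOfSeq w))]
  set A := binaryDigits ⁻¹' {X | IsPrefixOfSeq w X} ∩ Set.Ico 0 1
  rcases A.eq_empty_or_nonempty with hA | ⟨x₀, hx₀⟩
  · simp [hA]
  · refine le_trans (measure_mono fun x hx => ?_)
      (volume_setOf_floor_mul_two_pow_eq_le w.length ⌊x₀ * 2 ^ w.length⌋)
    refine floor_mul_two_pow_eq_of_binaryDigits_eq ?_ fun k hk =>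
      (hx.1 k hk).trans (hx₀.1 k hk).symm
    rw [Int.floor_eq_zero_iff.mpr hx.2, Int.floor_eq_zero_iff.mpr hx₀.2]

section Orbit

variable {Q : Type*} (σ : Q → Q) (o : Q → Bool)

def orbitOutput (q : Q) : ℕ → Bool := fun k => o (σ^[k] q)

lemma orbitOutput_succ (q : Q) (k : ℕ) :
    orbitOutput σ o q (k + 1) = orbitOutput σ o (σ q) k := by
  simp [orbitOutput]

def orbitStep : Option Q → Option Bool × Option Bool → Option Q
  | some q, (some a, some _) => if a = o q then some (σ q) else none
  | _, _ => none

lemma act_orbitStep_none (c : List (Option Bool × Option Bool)) :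
    act (orbitStep σ o) none c = none := by
  induction c with
  | nil => rfl
  | cons a c ih => exact ih

lemma act_orbitStep_ne_none_iff (q : Q) (c : List (Option Bool × Option Bool)) :
    act (orbitStep σ o) (some q) c ≠ none ↔
      ∃ i, c = conv (seqPrefix (orbitOutput σ o q) i.length) i := by
  induction c generalizing q with
  | nil => exact ⟨fun _ => ⟨[], rfl⟩, fun _ => Option.some_ne_none q⟩
  | cons a c ih =>
    have hcons : (∃ i, a :: c = conv (seqPrefix (orbitOutput σ o q) i.length) i) ↔
        ∃ b, a = (some (o q), some b) ∧
          ∃ i, c = conv (seqPrefix (orbitOutput σ o (σ q)) i.length) i := by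
      constructor
      · rintro ⟨_ | ⟨b, i⟩, h⟩
        · exact absurd h (List.cons_ne_nil _ _)
        · rw [List.length_cons, seqPrefix_succ, conv_cons_cons] at h
          simp only [orbitOutput_succ, List.cons.injEq] at h
          exact ⟨b, h.1, i, h.2⟩
      · rintro ⟨b, rfl, i, rfl⟩
        refine ⟨b :: i, ?_⟩
        rw [List.length_cons, seqPrefix_succ, conv_cons_cons]
        simp only [orbitOutput_succ]
        rfl
    change act (orbitStep σ o) (orbitStep σ o (some q) a) c ≠ none ↔ _
    rw [hcons]
    rcases a with ⟨_ | a, _ | b⟩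
    case some.some => by_cases ha : a = o q <;> simp [orbitStep, ha, ih, act_orbitStep_none]
    all_goals simp [orbitStep, act_orbitStep_none]

lemma orbitOutput_mem_coverRegion (q : Q) :
    orbitOutput σ o q ∈
      coverRegion Set.univ fun i => {seqPrefix (orbitOutput σ o q) i.length} :=
  Set.mem_iInter₂.mpr fun _ _ => ⟨_, rfl, isPrefixOfSeq_seqPrefix _ _⟩

lemma run_orbitOutput {T : Type*} (g : T → Bool → T) (o : T → Bool) (t₀ : T) (n : ℕ) :
    run g t₀ (orbitOutput (fun t => g t (o t)) o t₀) n = (fun t => g t (o t))^[n] t₀ := by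
  induction n with
  | zero => rfl
  | succ n ih => rw [run, ih, Function.iterate_succ_apply']; rfl

/-- The input letter at a state is chosen so as to stay among the states from which some run
avoids `F`. -/
theorem exists_orbitOutput_run_notMem {T : Type*} (g : T → Bool → T) (t₀ : T) (F : Set T)
    {X : ℕ → Bool} (hX : ∀ n, run g t₀ X n ∉ F) :
    ∃ (σ : T → T) (o : T → Bool), ∀ n, run g t₀ (orbitOutput σ o t₀) n ∉ F := by
  let Safe (t : T) : Prop := ∃ Y : ℕ → Bool, ∀ n, run g t Y n ∉ F
  have hstep (t : T) (ht : Safe t) : ∃ b, Safe (g t b) := by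
    obtain ⟨Y, hY⟩ := ht
    exact ⟨Y 0, fun k => Y (k + 1), fun n => run_succ_eq_run_shift g t Y n ▸ hY (n + 1)⟩
  choose! o ho using hstep
  have hsafe (n : ℕ) : Safe ((fun t => g t (o t))^[n] t₀) := by
    induction n with
    | zero => exact ⟨X, hX⟩
    | succ n ih => rw [Function.iterate_succ_apply']; exact ho _ ih
  refine ⟨fun t => g t (o t), o, fun n => ?_⟩
  obtain ⟨Y, hY⟩ := hsafe n
  rw [run_orbitOutput]
  exact hY 0

end Orbit

section FiniteOrbit

variable {Q : Type} [Fintype Q] (σ : Q → Q) (o : Q → Bool) (q : Q)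

theorem isAutomaticFamily_orbitOutput :
    IsAutomaticFamily Set.univ fun i => {seqPrefix (orbitOutput σ o q) i.length} := by
  refine ⟨⟨Unit, inferInstance, fun _ _ => (), (), Set.univ, by simp⟩,
    ⟨Option Q, inferInstance, orbitStep σ o, some q, {s | s ≠ none}, Set.ext fun c => ?_⟩⟩
  simp [act_orbitStep_ne_none_iff]

theorem isART_orbitOutput :
    IsART Set.univ fun i => {seqPrefix (orbitOutput σ o q) i.length} := by
  refine ⟨isAutomaticFamily_orbitOutput σ o q, fun ε hε => ?_⟩
  obtain ⟨n, hn⟩ := ENNReal.exists_inv_two_pow_lt hε.ne'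
  refine ⟨List.replicate n false, trivial, ?_⟩
  rw [cyl_singleton]
  calc mu _ ≤ 2⁻¹ ^ n := by
        simpa using mu_setOf_isPrefixOfSeq_le (seqPrefix (orbitOutput σ o q) n)
    _ ≤ ε := hn.le

end FiniteOrbit

/-- There is no universal automatic randomness test. -/
theorem stmt13 :
    ¬ ∃ (J : Set (List Bool)) (V : List Bool → Set (List Bool)),
        IsART J V ∧ ∀ (I : Set (List Bool)) (U : List Bool → Set (List Bool)),
          IsART I U → coverRegion I U ⊆ coverRegion J V := by
  rintro ⟨J, V, ⟨hfam, hsmall⟩, huniv⟩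
  obtain ⟨j, hj, hμ⟩ := hsmall 2⁻¹ (by norm_num)
  obtain ⟨T, _, g, t₀, F, hVj⟩ := hfam.regular_of_mem hj
  obtain ⟨X, hX⟩ : ∃ X, X ∉ cyl (V j) := by
    by_contra! h
    rw [Set.eq_univ_of_forall h, measure_univ] at hμ
    norm_num at hμ
  rw [hVj, mem_cyl_setOf_act_iff, not_exists] at hX
  obtain ⟨σ, o, hY⟩ := exists_orbitOutput_run_notMem g t₀ F hX
  have hYj : orbitOutput σ o t₀ ∈ cyl (V j) := Set.mem_iInter₂.mp
    (huniv _ _ (isART_orbitOutput σ o t₀) (orbitOutput_mem_coverRegion σ o t₀)) j hj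
  rw [hVj, mem_cyl_setOf_act_iff] at hYj
  obtain ⟨n, hn⟩ := hYj
  exact hY n hn
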